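/- Let d ≥ 2 and let μ_d be the Haar probability measure on the unitary group U(d). Then ∫ (|U_{00}|² − |U_{10}|²)² dμ_d(U) = 2 / (d(d+1)); equivalently, the random variable W(U) = d·(|U_{00}|² − |U_{10}|²) satisfies ∫ W² dμ_d = 2d/(d+1). -/

import Mathlib

open MeasureTheory

namespace HaarVarAux

variable {d : ℕ}

lemma cont_entry (s t : Fin d) :
    Continuous fun U : Matrix.unitaryGroup (Fin d) ℂ => (U : Matrix (Fin d) (Fin d) ℂ) s t :=
  (continuous_apply t).comp ((continuous_apply s).comp continuous_subtype_val)

lemma col_sum (U : Matrix.unitaryGroup (Fin d) ℂ) (j : Fin d) :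
    ∑ s, ‖(U : Matrix (Fin d) (Fin d) ℂ) s j‖ ^ 2 = 1 := by
  have h1 : star (U : Matrix (Fin d) (Fin d) ℂ) * (U : Matrix (Fin d) (Fin d) ℂ) = 1 :=
    (Unitary.mem_iff.mp U.2).1
  have h2 := congrFun (congrFun h1 j) j
  simp only [Matrix.mul_apply, Matrix.star_apply, Matrix.one_apply_eq] at h2
  have h3 : ∀ k : Fin d,
      star ((U : Matrix (Fin d) (Fin d) ℂ) k j) * (U : Matrix (Fin d) (Fin d) ℂ) k j
        = ((‖(U : Matrix (Fin d) (Fin d) ℂ) k j‖ ^ 2 : ℝ) : ℂ) := by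
    intro k
    rw [Complex.sq_norm]
    exact (Complex.normSq_eq_conj_mul_self).symm
  rw [Finset.sum_congr rfl (fun k _ => h3 k)] at h2
  rw [← Complex.ofReal_sum] at h2
  exact_mod_cast h2

/-- permutation unitary -/
noncomputable def permU (σ : Equiv.Perm (Fin d)) : Matrix.unitaryGroup (Fin d) ℂ :=
  ⟨(1 : Matrix (Fin d) (Fin d) ℂ).submatrix σ (Equiv.refl (Fin d)), by
    rw [Matrix.mem_unitaryGroup_iff]
    have hstar : star ((1 : Matrix (Fin d) (Fin d) ℂ).submatrix σ (Equiv.refl (Fin d)))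
        = (1 : Matrix (Fin d) (Fin d) ℂ).submatrix (Equiv.refl (Fin d)) σ := by
      simp [Matrix.star_eq_conjTranspose, Matrix.conjTranspose_submatrix]
    rw [hstar, Matrix.submatrix_mul_equiv, one_mul, Matrix.submatrix_one_equiv]⟩

lemma permU_mul_apply (σ : Equiv.Perm (Fin d)) (U : Matrix.unitaryGroup (Fin d) ℂ)
    (s t : Fin d) :
    ((permU σ * U : Matrix.unitaryGroup (Fin d) ℂ) : Matrix (Fin d) (Fin d) ℂ) s t
      = (U : Matrix (Fin d) (Fin d) ℂ) (σ s) t := by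
  show ((permU σ : Matrix (Fin d) (Fin d) ℂ) * (U : Matrix (Fin d) (Fin d) ℂ)) s t = _
  simp [permU, Matrix.mul_apply, Matrix.one_apply]


noncomputable def rotM (e0 e1 : Fin d) (c : ℂ) : Matrix (Fin d) (Fin d) ℂ :=
  fun k l =>
    if k = e0 then
      (if l = e0 then ((Real.sqrt 2)⁻¹ : ℝ)
       else if l = e1 then c * ((Real.sqrt 2)⁻¹ : ℝ) else 0)
    else if k = e1 then
      (if l = e0 then -(starRingEnd ℂ c) * ((Real.sqrt 2)⁻¹ : ℝ)
       else if l = e1 then ((Real.sqrt 2)⁻¹ : ℝ) else 0)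
    else if k = l then 1 else 0

lemma rotM_00 (e0 e1 : Fin d) (c : ℂ) : rotM e0 e1 c e0 e0 = ((Real.sqrt 2)⁻¹ : ℝ) := by
  simp [rotM]
lemma rotM_01 (e0 e1 : Fin d) (h01 : e0 ≠ e1) (c : ℂ) :
    rotM e0 e1 c e0 e1 = c * ((Real.sqrt 2)⁻¹ : ℝ) := by
  simp [rotM, Ne.symm h01]
lemma rotM_10 (e0 e1 : Fin d) (h01 : e0 ≠ e1) (c : ℂ) :
    rotM e0 e1 c e1 e0 = -(starRingEnd ℂ c) * ((Real.sqrt 2)⁻¹ : ℝ) := by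
  simp [rotM, Ne.symm h01]
lemma rotM_11 (e0 e1 : Fin d) (h01 : e0 ≠ e1) (c : ℂ) :
    rotM e0 e1 c e1 e1 = ((Real.sqrt 2)⁻¹ : ℝ) := by
  simp [rotM, Ne.symm h01]
lemma rotM_0j (e0 e1 : Fin d) (c : ℂ) {j : Fin d} (hj0 : j ≠ e0) (hj1 : j ≠ e1) :
    rotM e0 e1 c e0 j = 0 := by
  simp [rotM, hj0, hj1]
lemma rotM_1j (e0 e1 : Fin d) (h01 : e0 ≠ e1) (c : ℂ) {j : Fin d} (hj0 : j ≠ e0)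
    (hj1 : j ≠ e1) : rotM e0 e1 c e1 j = 0 := by
  simp [rotM, Ne.symm h01, hj0, hj1]

lemma rotM_mem (e0 e1 : Fin d) (h01 : e0 ≠ e1) (c : ℂ) (hc : c * (starRingEnd ℂ) c = 1) :
    rotM e0 e1 c ∈ Matrix.unitaryGroup (Fin d) ℂ := by
  rw [Matrix.mem_unitaryGroup_iff']
  have hs : (((Real.sqrt 2)⁻¹ : ℝ) : ℂ) * (((Real.sqrt 2)⁻¹ : ℝ) : ℂ) = (2⁻¹ : ℂ) := by
    rw [← Complex.ofReal_mul, ← mul_inv, Real.mul_self_sqrt (by norm_num)]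
    norm_num
  ext i j
  rw [Matrix.mul_apply]
  rw [← Finset.sum_compl_add_sum ({e0, e1} : Finset (Fin d))]
  have hcompl : ∀ k ∈ ({e0, e1} : Finset (Fin d))ᶜ,
      (star (rotM e0 e1 c)) i k * (rotM e0 e1 c) k j
        = if k = i then (if i = j then (1 : ℂ) else 0) else 0 := by
    intro k hk
    simp only [Finset.mem_compl, Finset.mem_insert, Finset.mem_singleton, not_or] at hk
    obtain ⟨hk0, hk1⟩ := hk
    simp only [Matrix.star_apply, rotM, if_neg hk0, if_neg hk1]
    by_cases hki : k = i <;> by_cases hkj : k = j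
    · subst hki; subst hkj; simp
    · subst hki; simp [Ne.symm hkj, hkj]
    · subst hkj; simp [hki]
    · simp [hki, hkj]
  rw [Finset.sum_congr rfl hcompl, Finset.sum_ite_eq' _ i, Finset.sum_pair h01]
  have h10 := Ne.symm h01
  simp only [Matrix.star_apply]
  by_cases hi0 : i = e0
  · rw [hi0]
    rw [if_neg (by simp), rotM_00, rotM_10 _ _ h01]
    by_cases hj0 : j = e0
    · rw [hj0]
      rw [rotM_00, rotM_10 _ _ h01, Matrix.one_apply_eq]
      simp only [Complex.star_def, map_mul, map_neg, Complex.conj_conj, Complex.conj_ofReal]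
      linear_combination (1 + c * (starRingEnd ℂ) c) * hs + 2⁻¹ * hc
    · by_cases hj1 : j = e1
      · rw [hj1]
        rw [rotM_01 _ _ h01, rotM_11 _ _ h01, Matrix.one_apply_ne h01]
        simp only [Complex.star_def, map_mul, map_neg, Complex.conj_conj, Complex.conj_ofReal]
        ring
      · rw [rotM_0j _ _ _ hj0 hj1, rotM_1j _ _ h01 _ hj0 hj1,
          Matrix.one_apply_ne (fun h => hj0 h.symm)]
        ring
  · by_cases hi1 : i = e1
    · rw [hi1]
      rw [if_neg (by simp), rotM_01 _ _ h01, rotM_11 _ _ h01]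
      by_cases hj0 : j = e0
      · rw [hj0]
        rw [rotM_00, rotM_10 _ _ h01, Matrix.one_apply_ne h10]
        simp only [Complex.star_def, map_mul, map_neg, Complex.conj_conj, Complex.conj_ofReal]
        ring
      · by_cases hj1 : j = e1
        · rw [hj1]
          rw [rotM_01 _ _ h01, rotM_11 _ _ h01, Matrix.one_apply_eq]
          simp only [Complex.star_def, map_mul, map_neg, Complex.conj_conj, Complex.conj_ofReal]
          linear_combination (1 + c * (starRingEnd ℂ) c) * hs + 2⁻¹ * hc
        · rw [rotM_0j _ _ _ hj0 hj1, rotM_1j _ _ h01 _ hj0 hj1,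
            Matrix.one_apply_ne (fun h => hj1 h.symm)]
          ring
    · rw [if_pos (by simp [hi0, hi1]), rotM_0j _ _ _ hi0 hi1, rotM_1j _ _ h01 _ hi0 hi1,
        Matrix.one_apply]
      simp

noncomputable def rotU (e0 e1 : Fin d) (h01 : e0 ≠ e1) (c : ℂ)
    (hc : c * (starRingEnd ℂ) c = 1) : Matrix.unitaryGroup (Fin d) ℂ :=
  ⟨rotM e0 e1 c, rotM_mem e0 e1 h01 c hc⟩

lemma rotU_mul_apply (e0 e1 : Fin d) (h01 : e0 ≠ e1) (c : ℂ)
    (hc : c * (starRingEnd ℂ) c = 1) (U : Matrix.unitaryGroup (Fin d) ℂ) (t : Fin d) :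
    ((rotU e0 e1 h01 c hc * U : Matrix.unitaryGroup (Fin d) ℂ) : Matrix (Fin d) (Fin d) ℂ) e0 t
      = (((Real.sqrt 2)⁻¹ : ℝ) : ℂ) *
        ((U : Matrix (Fin d) (Fin d) ℂ) e0 t + c * (U : Matrix (Fin d) (Fin d) ℂ) e1 t) := by
  show ((rotM e0 e1 c) * (U : Matrix (Fin d) (Fin d) ℂ)) e0 t = _
  rw [Matrix.mul_apply, ← Finset.sum_compl_add_sum ({e0, e1} : Finset (Fin d)),
    Finset.sum_pair h01, rotM_00, rotM_01 _ _ h01]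
  rw [Finset.sum_congr rfl (fun k hk => ?_), Finset.sum_const_zero]
  · ring
  · simp only [Finset.mem_compl, Finset.mem_insert, Finset.mem_singleton, not_or] at hk
    rw [rotM_0j _ _ _ hk.1 hk.2]
    exact zero_mul _

lemma quad_id (x y : ℂ) :
    ((‖x + 1*y‖)^2)^2 + ((‖x + (-1)*y‖)^2)^2
      + ((‖x + Complex.I*y‖)^2)^2 + ((‖x + (-Complex.I)*y‖)^2)^2
    = 4*((‖x‖^2) * (‖x‖^2)) + 16*((‖x‖^2) * (‖y‖^2))
      + 4*((‖y‖^2) * (‖y‖^2)) := by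
  simp only [Complex.sq_norm, Complex.normSq_apply, Complex.add_re, Complex.add_im,
    Complex.mul_re, Complex.mul_im, Complex.I_re, Complex.I_im, Complex.one_re, Complex.one_im,
    Complex.neg_re, Complex.neg_im]
  ring

end HaarVarAux

open HaarVarAux in
theorem haar_variance_core
    (d : ℕ) (hd : 2 ≤ d)
    [MeasurableSpace (Matrix.unitaryGroup (Fin d) ℂ)]
    [BorelSpace (Matrix.unitaryGroup (Fin d) ℂ)]
    (μ : Measure (Matrix.unitaryGroup (Fin d) ℂ))
    [μ.IsHaarMeasure] [IsProbabilityMeasure μ]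
    (e0 e1 : Fin d) (h01 : e0 ≠ e1) :
    ∫ U, (‖(U : Matrix (Fin d) (Fin d) ℂ) e0 e0‖ ^ 2 -
            ‖(U : Matrix (Fin d) (Fin d) ℂ) e1 e0‖ ^ 2) ^ 2 ∂μ
        = 2 / ((d : ℝ) * ((d : ℝ) + 1)) := by
  set f : Fin d → Matrix.unitaryGroup (Fin d) ℂ → ℝ :=
    fun s U => ‖(U : Matrix (Fin d) (Fin d) ℂ) s e0‖ ^ 2 with hf
  -- basic facts
  have hfc : ∀ s, Continuous (f s) :=
    fun s => (continuous_norm.comp (cont_entry s e0)).pow 2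
  have hf0 : ∀ s U, 0 ≤ f s U := fun s U => sq_nonneg _
  have hf1 : ∀ s U, f s U ≤ 1 := by
    intro s U
    have h := col_sum U e0
    calc f s U ≤ ∑ k, ‖(U : Matrix (Fin d) (Fin d) ℂ) k e0‖ ^ 2 :=
          Finset.single_le_sum
            (f := fun k => ‖(U : Matrix (Fin d) (Fin d) ℂ) k e0‖ ^ 2)
            (fun i _ => sq_nonneg _) (Finset.mem_univ s)
      _ = 1 := h
  have habs1 : ∀ (s : Fin d) (U : Matrix.unitaryGroup (Fin d) ℂ), ‖(U : Matrix (Fin d) (Fin d) ℂ) s e0‖ ≤ 1 := by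
    intro s U
    have := hf1 s U
    exact (pow_le_one_iff_of_nonneg (norm_nonneg _) (by norm_num)).mp this
  -- integrability
  have ibF : ∀ (F : Matrix.unitaryGroup (Fin d) ℂ → ℝ) (C : ℝ), Continuous F →
      (∀ U, ‖F U‖ ≤ C) → Integrable F μ := fun F C hF hb =>
    (integrable_const C).mono' hF.aestronglyMeasurable (Filter.Eventually.of_forall hb)
  have hint1 : ∀ s, Integrable (f s) μ := by
    intro s
    refine ibF _ 1 (hfc s) fun U => ?_
    rw [Real.norm_eq_abs, abs_of_nonneg (hf0 s U)]; exact hf1 s U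
  have hint2 : ∀ s t, Integrable (fun U => f s U * f t U) μ := by
    intro s t
    refine ibF _ 1 ((hfc s).mul (hfc t)) fun U => ?_
    rw [Real.norm_eq_abs, abs_of_nonneg (mul_nonneg (hf0 s U) (hf0 t U))]
    nlinarith [hf0 s U, hf0 t U, hf1 s U, hf1 t U]
  -- invariance
  have hInv : ∀ (g : Matrix.unitaryGroup (Fin d) ℂ) (F : Matrix.unitaryGroup (Fin d) ℂ → ℝ),
      ∫ U, F (g * U) ∂μ = ∫ U, F U ∂μ := fun g F => integral_mul_left_eq_self F g
  have h_sym1 : ∀ (σ : Equiv.Perm (Fin d)) (s : Fin d),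
      ∫ U, f (σ s) U ∂μ = ∫ U, f s U ∂μ := by
    intro σ s
    rw [← hInv (permU σ) (f s)]
    refine integral_congr_ae (Filter.Eventually.of_forall fun U => ?_)
    simp only [hf, permU_mul_apply]
  have h_sym2 : ∀ (σ : Equiv.Perm (Fin d)) (s t : Fin d),
      ∫ U, f (σ s) U * f (σ t) U ∂μ = ∫ U, f s U * f t U ∂μ := by
    intro σ s t
    rw [← hInv (permU σ) (fun U => f s U * f t U)]
    refine integral_congr_ae (Filter.Eventually.of_forall fun U => ?_)
    simp only [hf, permU_mul_apply]
  set A : ℝ := ∫ U, f e0 U * f e0 U ∂μ with hA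
  set B : ℝ := ∫ U, f e0 U * f e1 U ∂μ with hB
  set M : ℝ := ∫ U, f e0 U ∂μ with hM
  have hA1 : ∫ U, f e1 U * f e1 U ∂μ = A := by
    have h := h_sym2 (Equiv.swap e0 e1) e0 e0
    rwa [Equiv.swap_apply_left] at h
  have hBt : ∀ t, t ≠ e0 → ∫ U, f e0 U * f t U ∂μ = B := by
    intro t ht
    by_cases ht1 : t = e1
    · rw [ht1]
    · have h := h_sym2 (Equiv.swap e1 t) e0 e1
      rwa [Equiv.swap_apply_of_ne_of_ne h01 (Ne.symm ht), Equiv.swap_apply_left] at h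
  -- first moment
  have hMval : (d : ℝ) * M = 1 := by
    have hsum : ∫ U, (∑ s, f s U) ∂μ = 1 := by
      have hpt : (fun U : Matrix.unitaryGroup (Fin d) ℂ => ∑ s, f s U) = fun _ => (1:ℝ) :=
        funext fun U => col_sum U e0
      rw [hpt]; simp
    rw [integral_finset_sum _ (fun s _ => hint1 s)] at hsum
    have heach : ∀ s : Fin d, ∫ U, f s U ∂μ = M := by
      intro s
      have h := h_sym1 (Equiv.swap e0 s) e0
      rwa [Equiv.swap_apply_left] at h
    rw [Finset.sum_congr rfl (fun s _ => heach s), Finset.sum_const, Finset.card_univ,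
      Fintype.card_fin, nsmul_eq_mul] at hsum
    exact hsum
  -- second relation
  have hMB : M = A + ((d : ℝ) - 1) * B := by
    have hpt : ∀ U, f e0 U = ∑ t, f e0 U * f t U := by
      intro U; rw [← Finset.mul_sum, col_sum U e0, mul_one]
    have h1 : M = ∑ t, ∫ U, f e0 U * f t U ∂μ := by
      rw [hM, integral_congr_ae (Filter.Eventually.of_forall hpt),
        integral_finset_sum _ (fun t _ => hint2 e0 t)]
    have h2 : ∀ t : Fin d, ∫ U, f e0 U * f t U ∂μ = if t = e0 then A else B := by
      intro t
      by_cases ht : t = e0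
      · rw [if_pos ht, ht]
      · rw [if_neg ht, hBt t ht]
    rw [Finset.sum_congr rfl (fun t _ => h2 t)] at h1
    have h3 : (fun t : Fin d => if t = e0 then A else B)
        = fun t => B + if t = e0 then A - B else 0 := by
      funext t; by_cases ht : t = e0 <;> simp [ht]
    rw [h3, Finset.sum_add_distrib, Finset.sum_const, Finset.card_univ, Fintype.card_fin,
      Finset.sum_ite_eq' Finset.univ e0 (fun _ => A - B), if_pos (Finset.mem_univ e0),
      nsmul_eq_mul] at h1
    rw [h1]; ring
  -- rotations
  have habs2 : ∀ z : ℂ, ‖(((Real.sqrt 2)⁻¹ : ℝ) : ℂ) * z‖ ^ 2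
      = 2⁻¹ * ‖z‖ ^ 2 := by
    intro z
    rw [norm_mul, mul_pow, Complex.norm_real, Real.norm_eq_abs, _root_.sq_abs, inv_pow,
      Real.sq_sqrt (by norm_num : (0:ℝ) ≤ 2)]
  have hquartic : ∀ (c : ℂ), c * (starRingEnd ℂ) c = 1 →
      ∫ U, ((‖(U : Matrix (Fin d) (Fin d) ℂ) e0 e0
        + c * (U : Matrix (Fin d) (Fin d) ℂ) e1 e0‖) ^ 2) ^ 2 ∂μ = 4 * A := by
    intro c hc
    have h := (hInv (rotU e0 e1 h01 c hc) (fun U => f e0 U * f e0 U)).symm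
    have hpt : ∀ U, f e0 (rotU e0 e1 h01 c hc * U) * f e0 (rotU e0 e1 h01 c hc * U)
        = 4⁻¹ * (((‖(U : Matrix (Fin d) (Fin d) ℂ) e0 e0
            + c * (U : Matrix (Fin d) (Fin d) ℂ) e1 e0‖) ^ 2) ^ 2) := by
      intro U
      simp only [hf, rotU_mul_apply, habs2]
      ring
    rw [integral_congr_ae (Filter.Eventually.of_forall hpt), integral_const_mul] at h
    rw [← hA] at h
    linarith
  -- integrability of quartics
  have habsc : ∀ (c : ℂ), ‖c‖ = 1 → ∀ U : Matrix.unitaryGroup (Fin d) ℂ,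
      ‖((‖(U : Matrix (Fin d) (Fin d) ℂ) e0 e0
        + c * (U : Matrix (Fin d) (Fin d) ℂ) e1 e0‖) ^ 2) ^ 2‖ ≤ 16 := by
    intro c hcabs U
    have h1 : ‖(U : Matrix (Fin d) (Fin d) ℂ) e0 e0
        + c * (U : Matrix (Fin d) (Fin d) ℂ) e1 e0‖ ≤ 2 := by
      calc ‖_‖ ≤ ‖(U : Matrix (Fin d) (Fin d) ℂ) e0 e0‖
            + ‖c * (U : Matrix (Fin d) (Fin d) ℂ) e1 e0‖ := norm_add_le _ _
        _ ≤ 2 := by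
            rw [norm_mul, hcabs, one_mul]
            have := habs1 e0 U; have := habs1 e1 U; linarith
    have h0 : (0:ℝ) ≤ ‖(U : Matrix (Fin d) (Fin d) ℂ) e0 e0
        + c * (U : Matrix (Fin d) (Fin d) ℂ) e1 e0‖ := norm_nonneg _
    rw [Real.norm_eq_abs, abs_of_nonneg (by positivity)]
    have h2 : ‖(U : Matrix (Fin d) (Fin d) ℂ) e0 e0
        + c * (U : Matrix (Fin d) (Fin d) ℂ) e1 e0‖ ^ 2 ≤ 4 := by nlinarith
    nlinarith [h2, sq_nonneg (‖(U : Matrix (Fin d) (Fin d) ℂ) e0 e0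
        + c * (U : Matrix (Fin d) (Fin d) ℂ) e1 e0‖ ^ 2)]
  have hintq : ∀ (c : ℂ), ‖c‖ = 1 → Integrable (fun U : Matrix.unitaryGroup (Fin d) ℂ =>
      ((‖(U : Matrix (Fin d) (Fin d) ℂ) e0 e0
        + c * (U : Matrix (Fin d) (Fin d) ℂ) e1 e0‖) ^ 2) ^ 2) μ := by
    intro c hcabs
    refine ibF _ 16 ?_ (habsc c hcabs)
    exact ((continuous_norm.comp ((cont_entry e0 e0).add
      (continuous_const.mul (cont_entry e1 e0)))).pow 2).pow 2
  -- the four rotations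
  have hc1 : (1:ℂ) * (starRingEnd ℂ) 1 = 1 := by simp
  have hc2 : (-1:ℂ) * (starRingEnd ℂ) (-1) = 1 := by simp
  have hc3 : Complex.I * (starRingEnd ℂ) Complex.I = 1 := by
    simp [Complex.conj_I, Complex.I_mul_I]
  have hc4 : (-Complex.I) * (starRingEnd ℂ) (-Complex.I) = 1 := by
    simp [Complex.conj_I, Complex.I_mul_I]
  have ha1 : ‖(1:ℂ)‖ = 1 := by simp
  have ha2 : ‖(-1:ℂ)‖ = 1 := by simp
  have ha3 : ‖Complex.I‖ = 1 := Complex.norm_I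
  have ha4 : ‖-Complex.I‖ = 1 := by simp
  -- sum of the four quartic integrals
  have iq1 := hintq 1 ha1
  have iq2 := hintq (-1) ha2
  have iq3 := hintq Complex.I ha3
  have iq4 := hintq (-Complex.I) ha4
  have i12 : Integrable (fun U : Matrix.unitaryGroup (Fin d) ℂ =>
      ((‖(U : Matrix (Fin d) (Fin d) ℂ) e0 e0
        + 1 * (U : Matrix (Fin d) (Fin d) ℂ) e1 e0‖) ^ 2) ^ 2 + ((‖(U : Matrix (Fin d) (Fin d) ℂ) e0 e0
        + (-1) * (U : Matrix (Fin d) (Fin d) ℂ) e1 e0‖) ^ 2) ^ 2) μ := iq1.add iq2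
  have i123 : Integrable (fun U : Matrix.unitaryGroup (Fin d) ℂ =>
      ((‖(U : Matrix (Fin d) (Fin d) ℂ) e0 e0
        + 1 * (U : Matrix (Fin d) (Fin d) ℂ) e1 e0‖) ^ 2) ^ 2 + ((‖(U : Matrix (Fin d) (Fin d) ℂ) e0 e0
        + (-1) * (U : Matrix (Fin d) (Fin d) ℂ) e1 e0‖) ^ 2) ^ 2 + ((‖(U : Matrix (Fin d) (Fin d) ℂ) e0 e0
        + Complex.I * (U : Matrix (Fin d) (Fin d) ℂ) e1 e0‖) ^ 2) ^ 2) μ := i12.add iq3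
  have j1 : Integrable (fun U : Matrix.unitaryGroup (Fin d) ℂ =>
      4 * (f e0 U * f e0 U) + 16 * (f e0 U * f e1 U)) μ :=
    ((hint2 e0 e0).const_mul 4).add ((hint2 e0 e1).const_mul 16)
  have k1 : Integrable (fun U : Matrix.unitaryGroup (Fin d) ℂ =>
      f e0 U * f e0 U - 2 * (f e0 U * f e1 U)) μ :=
    (hint2 e0 e0).sub ((hint2 e0 e1).const_mul 2)
  have hLHS : ∫ U, (((‖(U : Matrix (Fin d) (Fin d) ℂ) e0 e0
        + 1 * (U : Matrix (Fin d) (Fin d) ℂ) e1 e0‖) ^ 2) ^ 2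
      + ((‖(U : Matrix (Fin d) (Fin d) ℂ) e0 e0
        + (-1) * (U : Matrix (Fin d) (Fin d) ℂ) e1 e0‖) ^ 2) ^ 2
      + ((‖(U : Matrix (Fin d) (Fin d) ℂ) e0 e0
        + Complex.I * (U : Matrix (Fin d) (Fin d) ℂ) e1 e0‖) ^ 2) ^ 2
      + ((‖(U : Matrix (Fin d) (Fin d) ℂ) e0 e0
        + (-Complex.I) * (U : Matrix (Fin d) (Fin d) ℂ) e1 e0‖) ^ 2) ^ 2) ∂μ = 16 * A := by
    rw [integral_add i123 iq4,
      integral_add i12 iq3,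
      integral_add iq1 iq2,
      hquartic 1 hc1, hquartic (-1) hc2, hquartic Complex.I hc3, hquartic (-Complex.I) hc4]
    ring
  -- pointwise identity and RHS
  have hRHS : ∫ U, (((‖(U : Matrix (Fin d) (Fin d) ℂ) e0 e0
        + 1 * (U : Matrix (Fin d) (Fin d) ℂ) e1 e0‖) ^ 2) ^ 2
      + ((‖(U : Matrix (Fin d) (Fin d) ℂ) e0 e0
        + (-1) * (U : Matrix (Fin d) (Fin d) ℂ) e1 e0‖) ^ 2) ^ 2
      + ((‖(U : Matrix (Fin d) (Fin d) ℂ) e0 e0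
        + Complex.I * (U : Matrix (Fin d) (Fin d) ℂ) e1 e0‖) ^ 2) ^ 2
      + ((‖(U : Matrix (Fin d) (Fin d) ℂ) e0 e0
        + (-Complex.I) * (U : Matrix (Fin d) (Fin d) ℂ) e1 e0‖) ^ 2) ^ 2) ∂μ
      = 8 * A + 16 * B := by
    have hpt : ∀ U : Matrix.unitaryGroup (Fin d) ℂ, (((‖(U : Matrix (Fin d) (Fin d) ℂ) e0 e0
        + 1 * (U : Matrix (Fin d) (Fin d) ℂ) e1 e0‖) ^ 2) ^ 2
      + ((‖(U : Matrix (Fin d) (Fin d) ℂ) e0 e0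
        + (-1) * (U : Matrix (Fin d) (Fin d) ℂ) e1 e0‖) ^ 2) ^ 2
      + ((‖(U : Matrix (Fin d) (Fin d) ℂ) e0 e0
        + Complex.I * (U : Matrix (Fin d) (Fin d) ℂ) e1 e0‖) ^ 2) ^ 2
      + ((‖(U : Matrix (Fin d) (Fin d) ℂ) e0 e0
        + (-Complex.I) * (U : Matrix (Fin d) (Fin d) ℂ) e1 e0‖) ^ 2) ^ 2)
        = 4 * (f e0 U * f e0 U) + 16 * (f e0 U * f e1 U) + 4 * (f e1 U * f e1 U) := by
      intro U
      have := quad_id ((U : Matrix (Fin d) (Fin d) ℂ) e0 e0)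
        ((U : Matrix (Fin d) (Fin d) ℂ) e1 e0)
      simp only [hf]
      linarith
    rw [integral_congr_ae (Filter.Eventually.of_forall hpt)]
    rw [integral_add j1 ((hint2 e1 e1).const_mul 4),
      integral_add ((hint2 e0 e0).const_mul 4) ((hint2 e0 e1).const_mul 16),
      integral_const_mul, integral_const_mul, integral_const_mul, hA1]
    rw [← hA, ← hB]; ring
  have hA2B : A = 2 * B := by
    rw [hLHS] at hRHS; linarith
  -- solve
  have hdpos : (0:ℝ) < d := by
    have : (2:ℝ) ≤ d := by exact_mod_cast hd
    linarith
  have hBval : (d : ℝ) * ((d : ℝ) + 1) * B = 1 := by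
    rw [hMB, hA2B] at hMval; ring_nf at hMval ⊢; linarith
  -- final
  have hexp : (fun U : Matrix.unitaryGroup (Fin d) ℂ => (f e0 U - f e1 U) ^ 2)
      = fun U => f e0 U * f e0 U - 2 * (f e0 U * f e1 U) + f e1 U * f e1 U :=
    funext fun U => by ring
  have key : ∫ U, (f e0 U - f e1 U) ^ 2 ∂μ = 2 / ((d : ℝ) * ((d : ℝ) + 1)) := by
    rw [hexp, integral_add k1 (hint2 e1 e1),
      integral_sub (hint2 e0 e0) ((hint2 e0 e1).const_mul 2), integral_const_mul, hA1,
      ← hA, ← hB]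
    have hne : (d : ℝ) * ((d : ℝ) + 1) ≠ 0 := by positivity
    rw [eq_div_iff hne]
    linear_combination (2 * ((d:ℝ) * ((d:ℝ)+1))) * hA2B + 2 * hBval
  exact key


theorem haar_variance_of_entry_difference
    (d : ℕ) (hd : 2 ≤ d)
    [MeasurableSpace (Matrix.unitaryGroup (Fin d) ℂ)]
    [BorelSpace (Matrix.unitaryGroup (Fin d) ℂ)]
    (μ : Measure (Matrix.unitaryGroup (Fin d) ℂ))
    [μ.IsHaarMeasure] [IsProbabilityMeasure μ] :
    (∫ U, (‖(U : Matrix (Fin d) (Fin d) ℂ) ⟨0, by omega⟩ ⟨0, by omega⟩‖ ^ 2 -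
            ‖(U : Matrix (Fin d) (Fin d) ℂ) ⟨1, by omega⟩ ⟨0, by omega⟩‖ ^ 2) ^ 2 ∂μ
        = 2 / ((d : ℝ) * ((d : ℝ) + 1))) ∧
    (∫ U, ((d : ℝ) * (‖(U : Matrix (Fin d) (Fin d) ℂ) ⟨0, by omega⟩ ⟨0, by omega⟩‖ ^ 2 -
            ‖(U : Matrix (Fin d) (Fin d) ℂ) ⟨1, by omega⟩ ⟨0, by omega⟩‖ ^ 2)) ^ 2 ∂μ
        = 2 * (d : ℝ) / ((d : ℝ) + 1)) := by
  have h01 : (⟨0, by omega⟩ : Fin d) ≠ (⟨1, by omega⟩ : Fin d) := by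
    simp [Fin.ext_iff]
  have key := haar_variance_core d hd μ ⟨0, by omega⟩ ⟨1, by omega⟩ h01
  refine ⟨key, ?_⟩
  have hexp : (fun U : Matrix.unitaryGroup (Fin d) ℂ =>
      ((d : ℝ) * (‖(U : Matrix (Fin d) (Fin d) ℂ) ⟨0, by omega⟩ ⟨0, by omega⟩‖ ^ 2 -
        ‖(U : Matrix (Fin d) (Fin d) ℂ) ⟨1, by omega⟩ ⟨0, by omega⟩‖ ^ 2)) ^ 2)
      = fun U : Matrix.unitaryGroup (Fin d) ℂ =>
      ((d : ℝ))^2 * ((‖(U : Matrix (Fin d) (Fin d) ℂ) ⟨0, by omega⟩ ⟨0, by omega⟩‖ ^ 2 -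
        ‖(U : Matrix (Fin d) (Fin d) ℂ) ⟨1, by omega⟩ ⟨0, by omega⟩‖ ^ 2) ^ 2) :=
    funext fun U => by ring
  rw [hexp, integral_const_mul, key]
  have hd0 : (d : ℝ) ≠ 0 := by
    have : (2:ℝ) ≤ d := by exact_mod_cast hd
    linarith
  have hd1 : (d : ℝ) + 1 ≠ 0 := by
    have : (2:ℝ) ≤ d := by exact_mod_cast hd
    linarith
  field_simp
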